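/- arXiv:1512.08766 — 4 statements merged into one kernel-verified Lean document; each statement's English description precedes it below -/
import Mathlib

section
/- If a nonnegative matrix M ∈ ℝ^{p×q} admits a size-k positive semidefinite factorization, i.e. there exist k×k symmetric psd matrices A_1,...,A_p and B_1,...,B_q with M_{ij} = trace(A_i B_j), then the rank of M satisfies rank(M) ≤ k(k+1)/2. -/
open Finset in
lemma symm_sum_aux {k : ℕ} (f : Fin k × Fin k → ℝ)
    (hf : ∀ x : Fin k × Fin k, f (x.2, x.1) = f x) :
    ∑ x : Fin k × Fin k, f x =
      ∑ x ∈ Finset.univ.filter (fun x : Fin k × Fin k => x.1 ≤ x.2),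
        (if x.1 = x.2 then (1 : ℝ) else 2) * f x := by
  rw [← Finset.sum_filter_add_sum_filter_not Finset.univ
      (fun x : Fin k × Fin k => x.1 ≤ x.2) f]
  have h1 : ∑ x ∈ Finset.univ.filter (fun x : Fin k × Fin k => ¬ x.1 ≤ x.2), f x
      = ∑ x ∈ Finset.univ.filter (fun x : Fin k × Fin k => x.1 < x.2), f x := by
    refine Finset.sum_nbij' (fun x => (x.2, x.1)) (fun x => (x.2, x.1)) ?_ ?_ ?_ ?_ ?_
    · intro a ha
      simp only [Finset.mem_filter, Finset.mem_univ, true_and, not_le] at ha ⊢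
      exact ha
    · intro a ha
      simp only [Finset.mem_filter, Finset.mem_univ, true_and, not_le] at ha ⊢
      exact ha
    · intro a _; rfl
    · intro a _; rfl
    · intro a _; exact (hf a).symm
  have h2 : ∀ x : Fin k × Fin k,
      (if x.1 = x.2 then (1 : ℝ) else 2) * f x
        = f x + if ¬ x.1 = x.2 then f x else 0 := by
    intro x
    by_cases h : x.1 = x.2 <;> simp [h] <;> ring
  rw [h1]
  simp only [h2]
  rw [Finset.sum_add_distrib, ← Finset.sum_filter, Finset.filter_filter]
  congr 1
  exact Finset.sum_congr (Finset.filter_congr fun x _ => by simp [lt_iff_le_and_ne])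
    (fun _ _ => rfl)

theorem stmt_2 (p q k : ℕ) (M : Matrix (Fin p) (Fin q) ℝ)
    (hM : ∀ i j, 0 ≤ M i j)
    (A : Fin p → Matrix (Fin k) (Fin k) ℝ) (B : Fin q → Matrix (Fin k) (Fin k) ℝ)
    (hA : ∀ i, (A i).PosSemidef) (hB : ∀ j, (B j).PosSemidef)
    (hfact : ∀ i j, M i j = (A i * B j).trace) :
    M.rank ≤ k * (k + 1) / 2 := by
  set S := {x : Fin k × Fin k // x.1 ≤ x.2}
  have hcard : Fintype.card S = k * (k + 1) / 2 := by
    have := Fintype.card_congr (Sym2.sortEquiv (α := Fin k))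
    rw [← this, Sym2.card, Fintype.card_fin, Nat.choose_two_right,
      Nat.add_sub_cancel, Nat.mul_comm]
  set F : Matrix (Fin p) S ℝ := fun i z => A i z.1.1 z.1.2 with hF
  set G : Matrix S (Fin q) ℝ :=
    fun z j => (if z.1.1 = z.1.2 then (1 : ℝ) else 2) * B j z.1.1 z.1.2 with hG
  have hfac : M = F * G := by
    ext i j
    have hAsymm : ∀ s t, A i s t = A i t s := by
      intro s t
      have := (hA i).1.apply s t
      simpa using this.symm
    have hBsymm : ∀ s t, B j s t = B j t s := by
      intro s t
      have := (hB j).1.apply s t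
      simpa using this.symm
    have htr : M i j = ∑ x : Fin k × Fin k, A i x.1 x.2 * B j x.1 x.2 := by
      rw [hfact i j, Matrix.trace, Fintype.sum_prod_type]
      simp only [Matrix.diag, Matrix.mul_apply]
      exact Finset.sum_congr rfl fun s _ => Finset.sum_congr rfl fun t _ => by
        rw [hBsymm s t]
    rw [htr, Matrix.mul_apply,
      symm_sum_aux (fun x => A i x.1 x.2 * B j x.1 x.2)
        (fun x => by simp only; rw [hAsymm x.2 x.1, hBsymm x.2 x.1]),
      Finset.sum_subtype (Finset.univ.filter (fun x : Fin k × Fin k => x.1 ≤ x.2))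
        (p := fun x : Fin k × Fin k => x.1 ≤ x.2) (by simp)
        (fun x : Fin k × Fin k => (if x.1 = x.2 then (1 : ℝ) else 2)
          * (A i x.1 x.2 * B j x.1 x.2))]
    apply Finset.sum_congr rfl
    intro x _
    simp only [hF, hG]
    ring
  calc M.rank = (F * G).rank := by rw [hfac]
    _ ≤ F.rank := Matrix.rank_mul_le_left F G
    _ ≤ Fintype.card S := Matrix.rank_le_card_width F
    _ = k * (k + 1) / 2 := hcard
end

section
/- The 3×3 circulant matrix with rows (a,b,c), (c,a,b), (b,c,a), with a,b,c ≥ 0, has psd rank at most 2 if and only if a² + b² + c² − 2(ab + ac + bc) ≤ 0. -/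
/-!
Write `Aᵢ`, `Bⱼ` for the factors and `X`, `Y` for the `3 × 3` matrices whose rows are their
coordinates `(A₀₀, A₀₁, A₁₁)`. Then `M = X * diag(1, 2, 1) * Yᵀ`, so `det M = 2 det X det Y`.
On symmetric `2 × 2` matrices `det` is a Lorentzian quadratic form and the psd cone is its future
cone. The Gram determinant of `A₀, A₁, A₂` for the polar form of `det` is a multiple of `(det X)²`.
The reverse Cauchy–Schwarz inequality for pairs in the cone and AM-GM then bound it by
`det (∑ Aᵢ)³`: `27 (det X)² ≤ det (∑ Aᵢ)³`. Reverse Cauchy–Schwarz once more,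
`4 det (∑ Aᵢ) det (∑ Bⱼ) ≤ tr ((∑ Aᵢ)(∑ Bⱼ))² = (∑ Mᵢⱼ)²`, gives `16 (det M)² ≤ (∑ Mᵢⱼ / 3)⁶`.
For the circulant matrix, `det M = (a + b + c)(a² + b² + c² - ab - ac - bc)`, so this is
`a² + b² + c² ≤ 2(ab + ac + bc)`. Conversely, when this holds, the projections onto the lines at
angles `0, ±π/3` extend to a psd factorization.
-/

open Matrix

theorem mul_mul_le_add_add_div_three_pow_three {x y z : ℝ} (hx : 0 ≤ x) (hy : 0 ≤ y)
    (hz : 0 ≤ z) : x * y * z ≤ ((x + y + z) / 3) ^ 3 := by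
  nlinarith [sq_nonneg (x - y), sq_nonneg (y - z), sq_nonneg (x - z), mul_nonneg hx hy,
    mul_nonneg hy hz, mul_nonneg hx hz, sq_nonneg (x + y - 2 * z), sq_nonneg (y + z - 2 * x),
    sq_nonneg (x + z - 2 * y)]

namespace Matrix

theorem PosSemidef.isSymm {n : Type*} [Fintype n] {A : Matrix n n ℝ} (hA : A.PosSemidef) :
    A.IsSymm :=
  isHermitian_iff_isSymm.1 hA.isHermitian

variable {A B : Matrix (Fin 2) (Fin 2) ℝ}

theorem posSemidef_fin_two_iff :
    A.PosSemidef ↔ A.IsSymm ∧ 0 ≤ A 0 0 ∧ 0 ≤ A 1 1 ∧ 0 ≤ A.det := by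
  rw [posSemidef_iff_dotProduct_mulVec, isHermitian_iff_isSymm, det_fin_two]
  refine and_congr_right fun hA => ?_
  have hA10 : A 1 0 = A 0 1 := hA.apply 0 1
  have hquad (x : Fin 2 → ℝ) :
      star x ⬝ᵥ (A *ᵥ x) = A 0 0 * (x 0 * x 0) + 2 * A 0 1 * x 0 * x 1 + A 1 1 * (x 1 * x 1) := by
    simp only [star_trivial, dotProduct, mulVec, Fin.sum_univ_two, hA10]
    ring
  simp only [hquad, hA10]
  constructor
  · intro h
    have hdisc := discrim_le_zero fun t => by simpa using h ![t, 1]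
    refine ⟨by simpa using h ![1, 0], by simpa using h ![0, 1], ?_⟩
    rw [discrim] at hdisc
    linarith
  · rintro ⟨h00, h11, hdet⟩ x
    rcases h00.eq_or_lt with h00 | h00
    · have h01 : A 0 1 = 0 := by nlinarith
      rw [← h00, h01]
      linarith [mul_nonneg h11 (mul_self_nonneg (x 1))]
    · nlinarith [sq_nonneg (A 0 0 * x 0 + A 0 1 * x 1), mul_nonneg hdet (mul_self_nonneg (x 1))]

theorem trace_mul_fin_two_of_isSymm (hA : A.IsSymm) (hB : B.IsSymm) :
    (A * B).trace = A 0 0 * B 0 0 + 2 * A 0 1 * B 0 1 + A 1 1 * B 1 1 := by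
  simp only [trace_fin_two, mul_apply, Fin.sum_univ_two, hA.apply 0 1, hB.apply 0 1]
  ring

theorem PosSemidef.trace_mul_nonneg_fin_two (hA : A.PosSemidef) (hB : B.PosSemidef) :
    0 ≤ (A * B).trace := by
  obtain ⟨hAs, hA00, hA11, hAdet⟩ := posSemidef_fin_two_iff.1 hA
  obtain ⟨hBs, hB00, hB11, hBdet⟩ := posSemidef_fin_two_iff.1 hB
  rw [det_fin_two, hAs.apply 0 1] at hAdet
  rw [det_fin_two, hBs.apply 0 1] at hBdet
  rw [trace_mul_fin_two_of_isSymm hAs hBs]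
  have hprod : (A 0 1 * B 0 1) ^ 2 ≤ (A 0 0 * B 0 0) * (A 1 1 * B 1 1) := by
    nlinarith [mul_le_mul (sub_nonneg.1 hAdet) (sub_nonneg.1 hBdet) (mul_self_nonneg _)
      (mul_nonneg hA00 hA11)]
  nlinarith [sq_nonneg (A 0 0 * B 0 0 - A 1 1 * B 1 1), mul_nonneg hA00 hB00, mul_nonneg hA11 hB11]

theorem PosSemidef.four_mul_det_mul_det_le_sq_trace_mul_fin_two (hA : A.PosSemidef)
    (hB : B.IsSymm) : 4 * (A.det * B.det) ≤ (A * B).trace ^ 2 := by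
  obtain ⟨hAs, hA00, hA11, hAdet⟩ := posSemidef_fin_two_iff.1 hA
  rw [det_fin_two, hAs.apply 0 1] at hAdet
  rw [trace_mul_fin_two_of_isSymm hAs hB, det_fin_two, det_fin_two, hAs.apply 0 1, hB.apply 0 1]
  rcases (add_nonneg hA00 hA11).eq_or_lt with htr | htr
  · have hAdet0 : A 0 0 * A 1 1 - A 0 1 * A 0 1 = 0 := by nlinarith
    rw [hAdet0, zero_mul, mul_zero]
    positivity
  -- Aczél's argument: for `λ = tr B / tr A` the matrix `λ • adjugate A - B` is traceless, so its
  -- determinant is `≤ 0`; hence `λ ↦ det (λ • adjugate A - B)`, with coefficients `det A`,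
  -- `-tr (A * B)` and `det B`, has a nonnegative discriminant.
  nlinarith [pow_pos htr 2, sq_nonneg (2 * (A 0 0 * A 1 1 - A 0 1 * A 0 1) * (B 0 0 + B 1 1)
      - (A 0 0 + A 1 1) * (A 0 0 * B 0 0 + 2 * A 0 1 * B 0 1 + A 1 1 * B 1 1)),
    mul_nonneg hAdet (add_nonneg (sq_nonneg ((B 0 0 + B 1 1) * A 1 1 - (A 0 0 + A 1 1) * B 0 0))
      (sq_nonneg ((B 0 0 + B 1 1) * A 0 1 + (A 0 0 + A 1 1) * B 0 1)))]

theorem PosSemidef.adjugate_fin_two (hA : A.PosSemidef) : A.adjugate.PosSemidef := by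
  obtain ⟨hAs, hA00, hA11, hAdet⟩ := posSemidef_fin_two_iff.1 hA
  refine posSemidef_fin_two_iff.2 ⟨?_, ?_, ?_, ?_⟩
  · rw [Matrix.adjugate_fin_two]
    exact IsSymm.ext fun i j => by fin_cases i <;> fin_cases j <;> simp [hAs.apply 0 1]
  · simpa [Matrix.adjugate_fin_two] using hA11
  · simpa [Matrix.adjugate_fin_two] using hA00
  · simpa [det_adjugate] using hAdet

def vech (A : Matrix (Fin 2) (Fin 2) ℝ) : Fin 3 → ℝ := ![A 0 0, A 0 1, A 1 1]

theorem sq_det_vech_le {A : Fin 3 → Matrix (Fin 2) (Fin 2) ℝ} (hA : ∀ i, (A i).PosSemidef) :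
    27 * (of fun i => vech (A i)).det ^ 2 ≤ (∑ i, A i).det ^ 3 := by
  set D := fun i => (A i).det with hD_def
  set g := fun i j => ((A i).adjugate * A j).trace with hg_def
  have hD (i) : 0 ≤ D i := (hA i).det_nonneg
  have hg (i j) : 0 ≤ g i j := (hA i).adjugate_fin_two.trace_mul_nonneg_fin_two (hA j)
  have hg_sq (i j) : 4 * (D i * D j) ≤ g i j ^ 2 := by
    simpa [D, det_adjugate] using
      (hA i).adjugate_fin_two.four_mul_det_mul_det_le_sq_trace_mul_fin_two (hA j).isSymm
  have hsymm (i) : A i 1 0 = A i 0 1 := (hA i).isSymm.apply 0 1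
  have hsum : (∑ i, A i).det = D 0 + D 1 + D 2 + g 0 1 + g 0 2 + g 1 2 := by
    simp only [hD_def, hg_def, Fin.sum_univ_three, det_fin_two, Matrix.adjugate_fin_two,
      trace_fin_two, mul_apply, Fin.sum_univ_two, add_apply, of_apply, cons_val', cons_val_zero,
      cons_val_one, empty_val', cons_val_fin_one]
    ring
  -- `g` is twice the polar form of `det`, whose matrix in `vech` coordinates has determinant
  -- `1 / 4`; hence the Gram determinant `det (g i j) = 2 * det (vech (A i))²`.
  have hgram : 2 * (of fun i => vech (A i)).det ^ 2 = 8 * (D 0 * D 1 * D 2)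
      + 2 * (g 0 1 * g 0 2 * g 1 2)
      - 2 * (D 0 * g 1 2 ^ 2 + D 1 * g 0 2 ^ 2 + D 2 * g 0 1 ^ 2) := by
    simp only [hD_def, hg_def, det_fin_three, det_fin_two, Matrix.adjugate_fin_two, vech,
      trace_fin_two, mul_apply, Fin.sum_univ_two, of_apply, cons_val', cons_val_zero,
      cons_val_one, cons_val_two, empty_val', cons_val_fin_one, vecHead, vecTail,
      Function.comp_apply, Fin.succ_zero_eq_one, hsymm]
    ring
  calc 27 * (of fun i => vech (A i)).det ^ 2 ≤ 27 * (g 0 1 * g 0 2 * g 1 2) := by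
        nlinarith [mul_nonneg (hD 2) (sub_nonneg.2 (hg_sq 0 1)),
          mul_nonneg (hD 0) (sq_nonneg (g 1 2)), mul_nonneg (hD 1) (sq_nonneg (g 0 2))]
    _ ≤ 27 * ((g 0 1 + g 0 2 + g 1 2) / 3) ^ 3 := by
        gcongr
        exact mul_mul_le_add_add_div_three_pow_three (hg 0 1) (hg 0 2) (hg 1 2)
    _ = (g 0 1 + g 0 2 + g 1 2) ^ 3 := by ring
    _ ≤ (∑ i, A i).det ^ 3 := by
        rw [hsum]
        gcongr
        · exact add_nonneg (add_nonneg (hg 0 1) (hg 0 2)) (hg 1 2)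
        · linarith [hD 0, hD 1, hD 2]

theorem det_eq_two_mul_det_vech_mul_det_vech {M : Matrix (Fin 3) (Fin 3) ℝ}
    {A B : Fin 3 → Matrix (Fin 2) (Fin 2) ℝ} (hA : ∀ i, (A i).IsSymm) (hB : ∀ j, (B j).IsSymm)
    (hM : ∀ i j, M i j = (A i * B j).trace) :
    M.det = 2 * (of fun i => vech (A i)).det * (of fun j => vech (B j)).det := by
  have hfactor :
      M = (of fun i => vech (A i)) * diagonal ![1, 2, 1] * (of fun j => vech (B j))ᵀ := by
    ext i j
    rw [hM, trace_mul_fin_two_of_isSymm (hA i) (hB j)]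
    simp only [mul_apply (M := _ * diagonal _), mul_diagonal, transpose_apply, of_apply,
      Fin.sum_univ_three, vech, cons_val_zero, cons_val_one, cons_val_two, vecHead, vecTail,
      Function.comp_apply, Fin.succ_zero_eq_one]
    ring
  rw [hfactor, det_mul, det_mul, det_transpose, det_diagonal, Fin.prod_univ_three]
  simp only [cons_val_zero, cons_val_one, cons_val_two, vecHead, vecTail, Function.comp_apply,
    Fin.succ_zero_eq_one]
  ring

theorem sixteen_mul_sq_det_le_of_eq_trace_mul {M : Matrix (Fin 3) (Fin 3) ℝ}
    {A B : Fin 3 → Matrix (Fin 2) (Fin 2) ℝ} (hA : ∀ i, (A i).PosSemidef)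
    (hB : ∀ j, (B j).PosSemidef) (hM : ∀ i j, M i j = (A i * B j).trace) :
    16 * M.det ^ 2 ≤ ((∑ i, ∑ j, M i j) / 3) ^ 6 := by
  have hAsum : (∑ i, A i).PosSemidef := posSemidef_sum _ fun i _ => hA i
  have hBsum : (∑ j, B j).PosSemidef := posSemidef_sum _ fun j _ => hB j
  have htrace : ((∑ i, A i) * ∑ j, B j).trace = ∑ i, ∑ j, M i j := by
    simp only [Finset.sum_mul, Finset.mul_sum, trace_sum, hM]
    exact Finset.sum_comm
  have hrev := hAsum.four_mul_det_mul_det_le_sq_trace_mul_fin_two hBsum.isSymm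
  rw [htrace] at hrev
  have hdet := det_eq_two_mul_det_vech_mul_det_vech (fun i => (hA i).isSymm)
    (fun j => (hB j).isSymm) hM
  have hX := sq_det_vech_le hA
  have hY := sq_det_vech_le hB
  have hdetA := hAsum.det_nonneg
  have hdetB := hBsum.det_nonneg
  calc 16 * M.det ^ 2
      = 64 * ((of fun i => vech (A i)).det ^ 2 * (of fun j => vech (B j)).det ^ 2) := by
        rw [hdet]; ring
    _ ≤ 64 * ((∑ i, A i).det ^ 3 / 27 * ((∑ j, B j).det ^ 3 / 27)) := by
        gcongr <;> linarith
    _ = (4 * ((∑ i, A i).det * (∑ j, B j).det)) ^ 3 / 729 := by ring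
    _ ≤ ((∑ i, ∑ j, M i j) ^ 2) ^ 3 / 729 := by gcongr
    _ = ((∑ i, ∑ j, M i j) / 3) ^ 6 := by ring

end Matrix

theorem det_circulant_three (a b c : ℝ) :
    (!![a, b, c; c, a, b; b, c, a] : Matrix (Fin 3) (Fin 3) ℝ).det =
      (a + b + c) * (a ^ 2 + b ^ 2 + c ^ 2 - a * b - a * c - b * c) := by
  simp only [det_fin_three, of_apply, cons_val', cons_val_zero, cons_val_one, cons_val_two,
    empty_val', cons_val_fin_one, vecHead, vecTail, Function.comp_apply, Fin.succ_zero_eq_one]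
  ring

theorem sum_circulant_three (a b c : ℝ) :
    ∑ i, ∑ j, (!![a, b, c; c, a, b; b, c, a] : Matrix (Fin 3) (Fin 3) ℝ) i j = 3 * (a + b + c) := by
  simp only [Fin.sum_univ_three, of_apply, cons_val', cons_val_zero, cons_val_one, cons_val_two,
    empty_val', cons_val_fin_one, vecHead, vecTail, Function.comp_apply, Fin.succ_zero_eq_one]
  ring

theorem add_sq_sub_two_mul_le_zero_of_sixteen_mul_sq_le {a b c : ℝ} (ha : 0 ≤ a) (hb : 0 ≤ b)
    (hc : 0 ≤ c) (h : 16 * ((a + b + c) * (a ^ 2 + b ^ 2 + c ^ 2 - a * b - a * c - b * c)) ^ 2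
      ≤ (a + b + c) ^ 6) :
    a ^ 2 + b ^ 2 + c ^ 2 - 2 * (a * b + a * c + b * c) ≤ 0 := by
  rcases (add_nonneg (add_nonneg ha hb) hc).eq_or_lt with hsum | hsum
  · obtain ⟨rfl, rfl, rfl⟩ : a = 0 ∧ b = 0 ∧ c = 0 := ⟨by linarith, by linarith, by linarith⟩
    norm_num
  have hR : 0 ≤ a ^ 2 + b ^ 2 + c ^ 2 - a * b - a * c - b * c := by
    nlinarith [sq_nonneg (a - b), sq_nonneg (b - c), sq_nonneg (a - c)]
  have hsq : (4 * (a ^ 2 + b ^ 2 + c ^ 2 - a * b - a * c - b * c)) ^ 2 ≤ ((a + b + c) ^ 2) ^ 2 := by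
    refine le_of_mul_le_mul_left ?_ (pow_pos hsum 2)
    linear_combination h
  linear_combination (pow_le_pow_iff_left₀ (by linarith) (by positivity) two_ne_zero).1 hsq / 3

-- The solution `B` of `tr (A i * B) = ![a, c, b] i`, where the `A i` are the projections onto the
-- lines at angles `0, π/3, -π/3`.
noncomputable def circulantWitness (a b c : ℝ) : Matrix (Fin 2) (Fin 2) ℝ :=
  !![a, √3 * (c - b) / 3; √3 * (c - b) / 3, (2 * b + 2 * c - a) / 3]

theorem posSemidef_circulantWitness {a b c : ℝ} (ha : 0 ≤ a) (hb : 0 ≤ b) (hc : 0 ≤ c)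
    (h : a ^ 2 + b ^ 2 + c ^ 2 - 2 * (a * b + a * c + b * c) ≤ 0) :
    (circulantWitness a b c).PosSemidef := by
  have hs : √3 ^ 2 = 3 := Real.sq_sqrt zero_le_three
  have hr : 0 ≤ 2 * b + 2 * c - a := by
    nlinarith [sq_nonneg (b - c), mul_nonneg hb hc]
  rw [circulantWitness]
  refine posSemidef_fin_two_iff.2 ⟨?_, ha, by simpa using div_nonneg hr zero_le_three, ?_⟩
  · exact IsSymm.ext fun i j => by fin_cases i <;> fin_cases j <;> rfl
  · rw [det_fin_two_of]
    nlinarith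

theorem exists_posSemidef_trace_mul_eq_circulant {a b c : ℝ} (ha : 0 ≤ a) (hb : 0 ≤ b)
    (hc : 0 ≤ c) (h : a ^ 2 + b ^ 2 + c ^ 2 - 2 * (a * b + a * c + b * c) ≤ 0) :
    ∃ (A B : Fin 3 → Matrix (Fin 2) (Fin 2) ℝ),
      (∀ i, (A i).PosSemidef) ∧ (∀ j, (B j).PosSemidef) ∧
      ∀ i j,
        (!![a, b, c; c, a, b; b, c, a] : Matrix (Fin 3) (Fin 3) ℝ) i j = (A i * B j).trace := by
  let u : Fin 3 → Fin 2 → ℝ := ![![1, 0], ![1 / 2, √3 / 2], ![1 / 2, -√3 / 2]]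
  refine ⟨fun i => vecMulVec (u i) (u i),
    ![circulantWitness a b c, circulantWitness b c a, circulantWitness c a b],
    fun i => by simpa using posSemidef_vecMulVec_self_star (u i), fun j => ?_, fun i j => ?_⟩
  · fin_cases j
    · exact posSemidef_circulantWitness ha hb hc h
    · exact posSemidef_circulantWitness hb hc ha (by linarith)
    · exact posSemidef_circulantWitness hc ha hb (by linarith)
  · have hs : √3 ^ 2 = 3 := Real.sq_sqrt zero_le_three
    fin_cases i <;> fin_cases j <;>
      simp [u, circulantWitness, vecMulVec, trace_fin_two, mul_apply, Fin.sum_univ_two] <;>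
      ring_nf <;> rw [hs] <;> ring

theorem stmt_6 (a b c : ℝ) (ha : 0 ≤ a) (hb : 0 ≤ b) (hc : 0 ≤ c) :
    (∃ (A B : Fin 3 → Matrix (Fin 2) (Fin 2) ℝ),
        (∀ i, (A i).PosSemidef) ∧ (∀ j, (B j).PosSemidef) ∧
        ∀ i j, (!![a, b, c; c, a, b; b, c, a] : Matrix (Fin 3) (Fin 3) ℝ) i j
          = (A i * B j).trace) ↔
    a ^ 2 + b ^ 2 + c ^ 2 - 2 * (a * b + a * c + b * c) ≤ 0 := by
  refine ⟨fun ⟨A, B, hA, hB, hM⟩ => ?_, exists_posSemidef_trace_mul_eq_circulant ha hb hc⟩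
  have hbound := sixteen_mul_sq_det_le_of_eq_trace_mul hA hB hM
  rw [det_circulant_three, sum_circulant_three, mul_div_cancel_left₀ _ three_ne_zero] at hbound
  exact add_sq_sub_two_mul_le_zero_of_sixteen_mul_sq_le ha hb hc hbound
end

section
/- Let M ∈ ℝ^{p×q} be a nonnegative matrix of rank r with no zero rows such that the all-ones vector is in the column span of M. Fix a rank factorization M = AB where A ∈ ℝ^{p×r} has rows A_i = (a_i^T, 1) with a_i ∈ ℝ^{r−1}, and B ∈ ℝ^{r×q}. Define P = conv(a_1,...,a_p) and Q = {x ∈ ℝ^{r−1} : (x^T, 1)B ≥ 0 entrywise}. Then P ⊆ Q, and the generalized slack matrix of the pair (P, Q), whose (i,j) entry is the value of the j-th defining affine functional of Q at a_i, equals M. -/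
theorem stmt_15 (p q n : ℕ) (M : Matrix (Fin p) (Fin q) ℝ)
    (hM : ∀ i j, 0 ≤ M i j)
    (hrank : M.rank = n + 1)
    (hrow : ∀ i, ∃ j, M i j ≠ 0)
    (hone : ∃ cvec : Fin q → ℝ, M.mulVec cvec = fun _ => (1 : ℝ))
    (a : Fin p → Fin n → ℝ) (B : Matrix (Fin (n + 1)) (Fin q) ℝ)
    (hfact : ∀ i j, M i j = ∑ l, (Fin.snoc (a i) (1 : ℝ) : Fin (n + 1) → ℝ) l * B l j) :
    let Q : Set (Fin n → ℝ) :=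
      {x | ∀ j, 0 ≤ ∑ l, (Fin.snoc x (1 : ℝ) : Fin (n + 1) → ℝ) l * B l j}
    convexHull ℝ (Set.range a) ⊆ Q ∧
    ∀ i j, (∑ l, (Fin.snoc (a i) (1 : ℝ) : Fin (n + 1) → ℝ) l * B l j) = M i j := by
  intro Q
  constructor
  · apply convexHull_min
    · rintro x ⟨i, rfl⟩ j
      rw [← hfact]; exact hM i j
    · intro x hx y hy s t hs ht hst j
      have hsnoc : ∀ l, (Fin.snoc (s • x + t • y) (1 : ℝ) : Fin (n + 1) → ℝ) l
          = s * (Fin.snoc x (1 : ℝ) : Fin (n + 1) → ℝ) l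
            + t * (Fin.snoc y (1 : ℝ) : Fin (n + 1) → ℝ) l := by
        intro l
        refine Fin.lastCases ?_ ?_ l
        · simp [hst]
        · intro i; simp
      calc (0 : ℝ) = s * 0 + t * 0 := by ring
        _ ≤ s * (∑ l, (Fin.snoc x (1 : ℝ) : Fin (n + 1) → ℝ) l * B l j)
            + t * (∑ l, (Fin.snoc y (1 : ℝ) : Fin (n + 1) → ℝ) l * B l j) := by
            gcongr <;> [exact hx j; exact hy j]
        _ = ∑ l, (Fin.snoc (s • x + t • y) (1 : ℝ) : Fin (n + 1) → ℝ) l * B l j := by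
            rw [Finset.mul_sum, Finset.mul_sum, ← Finset.sum_add_distrib]
            refine Finset.sum_congr rfl fun l _ => ?_
            rw [hsnoc]; ring
  · intro i j; exact (hfact i j).symm
end

section
/- Let P = conv(e_1,...,e_k, 0) ⊆ ℝ^k be the standard simplex and let a_1,...,a_k ∈ ℝ^k span ℝ^k. Define C = {x ∈ ℝ^k : x_1 a_1a_1^T + ... + x_k a_ka_k^T + (1 − Σx_i) B ⪰ 0} for a symmetric psd matrix B. Let d ∈ ℝ^k with d_i = √(B'_{ii}) where B' = UBU^T and U is the invertible map with U a_i = e_i, and define C' = {x : x_1 e_1e_1^T + ... + x_k e_ke_k^T + (1 − Σx_i) dd^T ⪰ 0} pulled back along the change of coordinates. Then e_1,...,e_k, 0 ∈ C' and C' ⊆ C. -/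
/-!
In the coordinates where `a i = e i`, the matrix `B` becomes `B' = U B Uᵀ`, and the condition
defining `C` becomes `diagonal x + (1 - ∑ x) • B' ⪰ 0`. Write `d i = √(B' i i)` and let `S` be the
correlation matrix of `B'`, so that `S ⪰ 0`, `S i i = 1` and `d i d j S i j = B' i j` (rows of a
psd matrix with zero diagonal entry vanish). Then the Hadamard product of
`diagonal x + (1 - ∑ x) • d dᵀ` with `S` is `diagonal x + (1 - ∑ x) • B'`, so the Schur product
theorem gives `C' ⊆ C`.
-/

open Matrix

namespace Matrix

variable {n : Type*} [Fintype n]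

open scoped ComplexOrder in
lemma PosSemidef.apply_eq_zero_of_diag_eq_zero {𝕜 : Type*} [RCLike 𝕜] [DecidableEq n]
    {A : Matrix n n 𝕜} (hA : A.PosSemidef) {i : n} (hi : A i i = 0) (j : n) : A j i = 0 := by
  have hcol : A *ᵥ Pi.single i 1 = 0 :=
    (hA.dotProduct_mulVec_zero_iff _).mp (by simp [mulVec_single, hi])
  simpa [mulVec_single] using congrFun hcol j

lemma transpose_mul_diagonal_mul_self {m R : Type*} [CommSemiring R] [DecidableEq n]
    (A : Matrix n m R) (x : n → R) :
    Aᵀ * diagonal x * A = ∑ i, x i • vecMulVec (A i) (A i) := by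
  ext p q
  rw [mul_apply]
  simp only [mul_diagonal, transpose_apply, sum_apply, smul_apply, vecMulVec_apply, smul_eq_mul]
  exact Finset.sum_congr rfl fun i _ => by ring

variable [DecidableEq n] {B : Matrix n n ℝ}

/-- `S i j = B i j / √(B i i * B j j)`; since `(√0)⁻¹ = 0`, this is `0` in every row and column
with `B i i = 0`, and the second summand puts `1` back on those diagonal entries. -/
noncomputable def correlation (B : Matrix n n ℝ) : Matrix n n ℝ :=
  diagonal (fun i => (√(B i i))⁻¹) * B * diagonal (fun i => (√(B i i))⁻¹)
    + diagonal (fun i => if B i i = 0 then 1 else 0)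

lemma posSemidef_correlation (hB : B.PosSemidef) : B.correlation.PosSemidef := by
  refine .add ?_ (.diagonal fun i => by dsimp only; split_ifs <;> norm_num)
  simpa using hB.conjTranspose_mul_mul_same (diagonal fun i => (√(B i i))⁻¹)

lemma diag_correlation (hB : B.PosSemidef) : B.correlation.diag = 1 := by
  ext i
  have hsq : √(B i i) * √(B i i) = B i i := Real.mul_self_sqrt hB.diag_nonneg
  by_cases h : B i i = 0
  · simp [correlation, h]
  · have : √(B i i) ≠ 0 := fun h0 => h (by rw [← hsq, h0, zero_mul])
    simp only [correlation, diag_apply, add_apply, mul_diagonal, diagonal_mul, diagonal_apply_eq,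
      h, ↓reduceIte, add_zero, Pi.one_apply]
    field_simp
    rw [sq, hsq]

lemma vecMulVec_sqrt_diag_hadamard_correlation (hB : B.PosSemidef) :
    vecMulVec (fun i => √(B i i)) (fun i => √(B i i)) ⊙ B.correlation = B := by
  ext i j
  have hsym : B i j = B j i := by simpa using (hB.isHermitian.apply i j).symm
  by_cases hi : B i i = 0
  · simp [correlation, vecMulVec_apply, hi, hB.apply_eq_zero_of_diag_eq_zero hi, hsym]
  by_cases hj : B j j = 0
  · simp [correlation, vecMulVec_apply, hj, hB.apply_eq_zero_of_diag_eq_zero hj]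
  have hi' : √(B i i) ≠ 0 := (Real.sqrt_pos.2 (hB.diag_nonneg.lt_of_ne' hi)).ne'
  have hj' : √(B j j) ≠ 0 := (Real.sqrt_pos.2 (hB.diag_nonneg.lt_of_ne' hj)).ne'
  simp only [correlation, hadamard_apply, vecMulVec_apply, add_apply, mul_diagonal, diagonal_mul,
    diagonal_apply, hi, ↓reduceIte, ite_self, add_zero]
  field_simp

lemma PosSemidef.diagonal_add_smul_of_vecMulVec_sqrt_diag (hB : B.PosSemidef) {x : n → ℝ}
    {c : ℝ}
    (h : (diagonal x + c • vecMulVec (fun i => √(B i i)) (fun i => √(B i i))).PosSemidef) :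
    (diagonal x + c • B).PosSemidef := by
  have := h.hadamard (posSemidef_correlation hB)
  rwa [add_hadamard, smul_hadamard, diagonal_hadamard, diag_correlation hB, mul_one,
    vecMulVec_sqrt_diag_hadamard_correlation hB] at this

end Matrix

theorem stmt_18_general (k : ℕ) (a : Fin k → Fin k → ℝ) (U B : Matrix (Fin k) (Fin k) ℝ)
    (hUa : ∀ i, U.mulVec (a i) = Pi.single i 1)
    (hB : B.PosSemidef) :
    let B' : Matrix (Fin k) (Fin k) ℝ := U * B * U.transpose
    let d : Fin k → ℝ := fun i => Real.sqrt (B' i i)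
    let C : Set (Fin k → ℝ) := {x | (∑ i, x i • Matrix.vecMulVec (a i) (a i)
      + (1 - ∑ i, x i) • B).PosSemidef}
    let C' : Set (Fin k → ℝ) := {x | (Matrix.diagonal x
      + (1 - ∑ i, x i) • Matrix.vecMulVec d d).PosSemidef}
    (∀ i, Pi.single i (1 : ℝ) ∈ C') ∧ (0 : Fin k → ℝ) ∈ C' ∧ C' ⊆ C := by
  intro B' d C C'
  have hB' : B'.PosSemidef := by simpa using hB.mul_mul_conjTranspose_same U
  -- `(of a)ᵀ` has columns `a i`, so `hUa` makes it a right, hence two-sided, inverse of `U`.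
  have hAU : (of a)ᵀ * U = 1 := by
    refine mul_eq_one_comm.mp (ext fun p i => ?_)
    simpa [mul_apply, mulVec, dotProduct, Pi.single_apply, one_apply, eq_comm] using
      congrFun (hUa i) p
  have hB'B : (of a)ᵀ * B' * of a = B := by
    calc (of a)ᵀ * B' * of a = ((of a)ᵀ * U) * B * ((of a)ᵀ * U)ᵀ := by
          simp [B', Matrix.mul_assoc]
      _ = B := by simp [hAU]
  refine ⟨fun i => ?_, ?_, fun x hx => ?_⟩
  · show (diagonal (Pi.single i 1) + (1 - ∑ j, Pi.single i (1 : ℝ) j) • vecMulVec d d).PosSemidef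
    simpa using PosSemidef.diagonal (Pi.single_nonneg.2 (zero_le_one' ℝ))
  · show (diagonal 0 + (1 - ∑ i, (0 : Fin k → ℝ) i) • vecMulVec d d).PosSemidef
    simpa using posSemidef_vecMulVec_self_star d
  · have := (hB'.diagonal_add_smul_of_vecMulVec_sqrt_diag hx).conjTranspose_mul_mul_same (of a)
    show (∑ i, x i • vecMulVec (a i) (a i) + (1 - ∑ i, x i) • B).PosSemidef
    rwa [conjTranspose_eq_transpose_of_trivial, Matrix.mul_add, Matrix.add_mul, Matrix.mul_smul,
      Matrix.smul_mul, hB'B, transpose_mul_diagonal_mul_self] at this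

theorem stmt_18 (k : ℕ) (a : Fin k → Fin k → ℝ) (U B : Matrix (Fin k) (Fin k) ℝ)
    (hspan : Submodule.span ℝ (Set.range a) = ⊤)
    (hU : IsUnit U)
    (hUa : ∀ i, U.mulVec (a i) = Pi.single i 1)
    (hB : B.PosSemidef) :
    let B' : Matrix (Fin k) (Fin k) ℝ := U * B * U.transpose
    let d : Fin k → ℝ := fun i => Real.sqrt (B' i i)
    let C : Set (Fin k → ℝ) := {x | (∑ i, x i • Matrix.vecMulVec (a i) (a i)
      + (1 - ∑ i, x i) • B).PosSemidef}
    let C' : Set (Fin k → ℝ) := {x | (Matrix.diagonal x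
      + (1 - ∑ i, x i) • Matrix.vecMulVec d d).PosSemidef}
    (∀ i, Pi.single i (1 : ℝ) ∈ C') ∧ (0 : Fin k → ℝ) ∈ C' ∧ C' ⊆ C :=
  stmt_18_general k a U B hUa hB
end
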